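/- arXiv:1808.03066 — 2 statements merged into one kernel-verified Lean document; each statement's English description precedes it below -/
import Mathlib

section
/- Define F_n(t) as the determinant of the (n+1)×(n+1) matrix 𝓜ᴮ_n whose (i, n+1) entry is t^{(n-i+1)^2} and whose (i,j) entry for j ≤ n is t^{C(j-i+1,2)} if j-i+1 ≥ 0 and 0 otherwise. Then F_n(t) = Σ_{i=0}^{n} (-1)^i t^{i^2} H_{n-1-i}(t), where H_m(t) = det 𝓜ᴬ_m (with H_{-1} = H_0 = 1) is the determinant of the type-A matrix. -/
open Polynomial

/-- The `(n+1) × (n+1)` matrix `𝓜ᴬ_n` over `ℤ[t]`. -/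
noncomputable def MatA (n : ℕ) : Matrix (Fin (n + 1)) (Fin (n + 1)) (Polynomial ℤ) :=
  Matrix.of fun i j =>
    if (i : ℕ) ≤ (j : ℕ) + 1 then (X : Polynomial ℤ) ^ (((j : ℕ) + 1 - (i : ℕ)).choose 2) else 0

/-- `H_m = det 𝓜ᴬ_m` for `m ≥ 0`, and `H_{-1} = 1` (note `H_0 = 1` as well). -/
noncomputable def polyH (m : ℤ) : Polynomial ℤ :=
  if 0 ≤ m then (MatA m.toNat).det else 1

/-- The `(n+1) × (n+1)` matrix `𝓜ᴮ_n` over `ℤ[t]`: its `(i, n+1)` entry (1-based) is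
`t^{(n-i+1)^2}`, and for `j ≤ n` its `(i,j)` entry is `t^{C(j-i+1,2)}` when
`j - i + 1 ≥ 0` and `0` otherwise. -/
noncomputable def MatB (n : ℕ) : Matrix (Fin (n + 1)) (Fin (n + 1)) (Polynomial ℤ) :=
  Matrix.of fun i j =>
    if (j : ℕ) = n then (X : Polynomial ℤ) ^ ((n - (i : ℕ)) ^ 2)
    else if (i : ℕ) ≤ (j : ℕ) + 1 then (X : Polynomial ℤ) ^ (((j : ℕ) + 1 - (i : ℕ)).choose 2)
    else 0

/-! The minor of `𝓜ᴮ_n` obtained by deleting row `k` and the last column is block upper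
triangular: its top-left block is `𝓜ᴬ_{k-1}` and its bottom-right block is unitriangular, so
its determinant is `H_{k-1}`. Expanding along the last column and reversing the order of
summation gives the formula. -/

lemma Matrix.det_eq_det_submatrix_castSucc_of_last_row {R : Type*} [CommRing R] {n : ℕ}
    (M : Matrix (Fin (n + 1)) (Fin (n + 1)) R)
    (h : ∀ j, M (Fin.last n) j = if j = Fin.last n then 1 else 0) :
    M.det = (M.submatrix Fin.castSucc Fin.castSucc).det := by
  rw [Matrix.det_succ_row _ (Fin.last n), Fintype.sum_eq_single (Fin.last n)]
  · simp [h, Fin.succAbove_last]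
  · intro j hj
    simp [h, hj]

lemma polyH_natCast (m : ℕ) : polyH m = (MatA m).det := by
  simp [polyH]

lemma polyH_neg_one : polyH (-1) = 1 := by
  simp [polyH]

lemma MatA_submatrix_castSucc (n : ℕ) :
    (MatA (n + 1)).submatrix Fin.castSucc Fin.castSucc = MatA n := by
  ext i j
  simp [MatA]

lemma MatA_last_apply_castSucc (n : ℕ) (j : Fin (n + 1)) :
    MatA (n + 1) (Fin.last (n + 1)) j.castSucc = if j = Fin.last n then 1 else 0 := by
  rcases Fin.eq_castSucc_or_eq_last j with ⟨j, rfl⟩ | rfl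
  · have : ¬ n + 1 ≤ (j : ℕ) + 1 := by omega
    simp [MatA, this, Fin.castSucc_ne_last]
  · simp [MatA]

theorem det_MatA_submatrix_succAbove_castSucc (n : ℕ) (k : Fin (n + 1)) :
    ((MatA n).submatrix k.succAbove Fin.castSucc).det = polyH ((k : ℤ) - 1) := by
  induction n with
  | zero =>
    rw [Fin.fin_one_eq_zero k]
    simp [polyH_neg_one]
  | succ m ih =>
    induction k using Fin.lastCases with
    | last =>
      rw [Fin.succAbove_last, MatA_submatrix_castSucc, Fin.val_last]
      simpa using (polyH_natCast m).symm
    | cast k =>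
      rw [Matrix.det_eq_det_submatrix_castSucc_of_last_row]
      · simp only [Matrix.submatrix_submatrix, Function.comp_def, Fin.castSucc_succAbove_castSucc]
        rw [Fin.val_castSucc, ← ih k, ← MatA_submatrix_castSucc]
        rfl
      · intro j
        simpa [Fin.succAbove_ne_last_last (Fin.castSucc_ne_last k)] using
          MatA_last_apply_castSucc m j

lemma MatB_apply_last (n : ℕ) (i : Fin (n + 1)) :
    MatB n i (Fin.last n) = X ^ ((n - (i : ℕ)) ^ 2) := by
  simp [MatB]

lemma MatB_submatrix_castSucc (n : ℕ) :
    (MatB n).submatrix id Fin.castSucc = (MatA n).submatrix id Fin.castSucc := by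
  ext i j
  simp [MatB, MatA, j.isLt.ne]

lemma det_MatB_eq_sum (n : ℕ) :
    (MatB n).det =
      ∑ i : Fin (n + 1), (-1) ^ ((i : ℕ) + n) * X ^ ((n - (i : ℕ)) ^ 2) * polyH ((i : ℤ) - 1) := by
  rw [Matrix.det_succ_column _ (Fin.last n)]
  refine Fintype.sum_congr _ _ fun i => ?_
  have hminor : (MatB n).submatrix i.succAbove (Fin.last n).succAbove =
      (MatA n).submatrix i.succAbove Fin.castSucc := by
    rw [Fin.succAbove_last]
    exact congrArg (Matrix.submatrix · i.succAbove id) (MatB_submatrix_castSucc n)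
  rw [MatB_apply_last, hminor, det_MatA_submatrix_succAbove_castSucc, Fin.val_last]

/-- Cofactor expansion along the last column:
`F_n(t) = det 𝓜ᴮ_n = ∑_{i=0}^{n} (-1)^i t^{i^2} H_{n-1-i}(t)`. -/
theorem det_MatB_expansion_last_column :
    ∀ n : ℕ, 1 ≤ n → (MatB n).det =
      ∑ i ∈ Finset.range (n + 1),
        (-1 : Polynomial ℤ) ^ i * ((X : Polynomial ℤ) ^ (i ^ 2) * polyH ((n : ℤ) - 1 - i)) := by
  intro n _
  rw [det_MatB_eq_sum, Fin.sum_univ_eq_sum_range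
    (fun i => (-1) ^ (i + n) * X ^ ((n - i) ^ 2) * polyH ((i : ℤ) - 1)), ← Finset.sum_range_reflect]
  refine Finset.sum_congr rfl fun i hi => ?_
  have hin : i ≤ n := Nat.lt_succ_iff.mp (Finset.mem_range.mp hi)
  have hsign : (-1 : Polynomial ℤ) ^ (n - i + n) = (-1) ^ i := by
    rw [show n - i + n = i + 2 * (n - i) by omega, pow_add, pow_mul]
    simp
  rw [Nat.add_sub_cancel, Nat.sub_sub_self hin, hsign, Nat.cast_sub hin]
  ring_nf
end

section
/- The determinant of the n×n matrix 𝓜ᴰ_n (type D) is a polynomial of degree exactly n(n-1) in t, for n ≥ 2. -/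
open Polynomial

/-- The `n × n` matrix `𝓜ᴰ_n` over `ℤ[t]`: its `(i, n)` entry (1-based) is
`2t^{C(n-i+1,2)} - t^{(n-i+1)(n-i)}`, and for `j < n` its `(i,j)` entry is
`t^{C(j-i+1,2)}` when `j - i + 1 ≥ 0` and `0` otherwise. -/
noncomputable def MatD (n : ℕ) : Matrix (Fin n) (Fin n) (Polynomial ℤ) :=
  Matrix.of fun i j =>
    if (j : ℕ) = n - 1 then
      2 * (X : Polynomial ℤ) ^ ((n - (i : ℕ)).choose 2) -
        (X : Polynomial ℤ) ^ ((n - (i : ℕ)) * (n - (i : ℕ) - 1))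
    else if (i : ℕ) ≤ (j : ℕ) + 1 then (X : Polynomial ℤ) ^ (((j : ℕ) + 1 - (i : ℕ)).choose 2)
    else 0

/-!
Expand the determinant over permutations `σ`, with `r = σ (last)`. Since `𝓜ᴰ` is upper
Hessenberg, a nonzero term has `σ k ≤ k + 1` in every column `k` but the last, and these defects
`k + 1 - σ k` add up to `r`. The first `n - 1` columns therefore contribute degree at most
`C(r, 2)` (superadditivity of `C(·, 2)`), and the last one at most `2 C(n - r, 2)`. For `r ≥ 1` the
total is below `n(n-1) = 2 C(n, 2)`, while `r = 0` forces `σ` to be the cycle `finRotate`, whose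
term is `±(2t^{C(n,2)} - t^{n(n-1)})`.
-/

open Finset Equiv

theorem Nat.choose_two_add (a b : ℕ) : (a + b).choose 2 = a.choose 2 + a * b + b.choose 2 := by
  simp [Nat.add_choose_eq, Finset.Nat.antidiagonal_succ]
  ring

theorem Nat.choose_two_add_choose_two_lt {a b : ℕ} (ha : 0 < a) (hb : 0 < b) :
    a.choose 2 + b.choose 2 < (a + b).choose 2 := by
  rw [Nat.choose_two_add]
  have := Nat.mul_pos ha hb
  omega

theorem Nat.two_mul_choose_two (a : ℕ) : 2 * a.choose 2 = a * (a - 1) := by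
  rw [Nat.choose_two_right, Nat.mul_div_cancel' (Nat.even_mul_pred_self a).two_dvd]

theorem Finset.sum_choose_two_le_choose_two_sum {ι : Type*} (s : Finset ι) (f : ι → ℕ) :
    ∑ i ∈ s, (f i).choose 2 ≤ (∑ i ∈ s, f i).choose 2 := by
  induction s using Finset.cons_induction with
  | empty => simp
  | cons a s ha ih =>
    rw [sum_cons, sum_cons, Nat.choose_two_add]
    omega

namespace Equiv.Perm

variable {n : ℕ} {σ : Perm (Fin (n + 1))}

theorem sum_succ_sub_apply_castSucc (h : ∀ k : Fin n, (σ k.castSucc : ℕ) ≤ k + 1) :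
    ∑ k : Fin n, ((k : ℕ) + 1 - σ k.castSucc) = σ (Fin.last n) := by
  have hσ : ∑ k : Fin n, (σ k.castSucc : ℕ) + σ (Fin.last n) = ∑ k : Fin n, ((k : ℕ) + 1) := by
    rw [← Fin.sum_univ_castSucc (fun i => (σ i : ℕ)), Equiv.sum_comp σ (fun i => (i : ℕ)),
      Fin.sum_univ_succ]
    simp
  have hsplit : ∑ k : Fin n, ((k : ℕ) + 1 - σ k.castSucc) + ∑ k : Fin n, (σ k.castSucc : ℕ) =
      ∑ k : Fin n, ((k : ℕ) + 1) := by
    rw [← sum_add_distrib]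
    exact sum_congr rfl fun k _ => Nat.sub_add_cancel (h k)
  omega

theorem eq_finRotate_of_apply_last_eq_zero (h : ∀ k : Fin n, (σ k.castSucc : ℕ) ≤ k + 1)
    (h0 : σ (Fin.last n) = 0) : σ = finRotate (n + 1) := by
  have hsum := sum_succ_sub_apply_castSucc h
  rw [h0, Fin.val_zero, sum_eq_zero_iff] at hsum
  ext i
  induction i using Fin.lastCases with
  | last => rw [h0, finRotate_last]
  | cast k =>
    have := hsum k (mem_univ k)
    simp only [finRotate_apply, Fin.coeSucc_eq_succ, Fin.val_succ]
    have := h k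
    omega

end Equiv.Perm

theorem Matrix.degree_det_eq_of_degree_prod_lt {R ι : Type*} [CommRing R] [Fintype ι]
    [DecidableEq ι] (A : Matrix ι ι R[X]) (τ : Perm ι) {d : ℕ}
    (hτ : (∏ i, A (τ i) i).degree = d) (h : ∀ σ ≠ τ, (∏ i, A (σ i) i).degree < d) :
    A.det.degree = d := by
  have hsign (σ : Perm ι) : (Perm.sign σ • ∏ i, A (σ i) i).degree = (∏ i, A (σ i) i).degree :=
    degree_smul_of_smul_regular _ (isSMulRegular_of_group _)
  have hrest : (∑ σ ∈ univ.erase τ, Perm.sign σ • ∏ i, A (σ i) i).degree < d :=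
    (degree_sum_le _ _).trans_lt <| (Finset.sup_lt_iff (WithBot.bot_lt_coe d)).2 fun σ hσ =>
      (hsign σ).trans_lt (h σ (ne_of_mem_erase hσ))
  rw [Matrix.det_apply, ← add_sum_erase _ _ (mem_univ τ), degree_add_eq_left_of_degree_lt] <;>
    rw [hsign, hτ]
  exact hrest

section MatD

variable {n : ℕ}

theorem MatD_apply_last (i : Fin (n + 1)) :
    MatD (n + 1) i (Fin.last n) =
      2 * X ^ ((n + 1 - i).choose 2) - X ^ ((n + 1 - i) * (n + 1 - i - 1)) := by
  simp [MatD]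

theorem MatD_apply_castSucc (i : Fin (n + 1)) (k : Fin n) :
    MatD (n + 1) i k.castSucc = if (i : ℕ) ≤ k + 1 then X ^ (((k : ℕ) + 1 - i).choose 2) else 0 := by
  simp [MatD, k.isLt.ne]

theorem natDegree_MatD_apply_last_le (i : Fin (n + 1)) :
    (MatD (n + 1) i (Fin.last n)).natDegree ≤ 2 * (n + 1 - i).choose 2 := by
  rw [MatD_apply_last, ← Nat.two_mul_choose_two]
  compute_degree
  omega

theorem degree_prod_MatD_finRotate (hn : 1 ≤ n) :
    (∏ i, MatD (n + 1) (finRotate (n + 1) i) i).degree = ((n + 1) * n : ℕ) := by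
  have hdiag (k : Fin n) : MatD (n + 1) (finRotate (n + 1) k.castSucc) k.castSucc = 1 := by
    simp [MatD_apply_castSucc]
  have hchoose : (n + 1).choose 2 < (n + 1) * n := by
    have htwice : 2 * (n + 1).choose 2 = (n + 1) * n := by
      simpa using Nat.two_mul_choose_two (n + 1)
    have hpos := Nat.choose_pos (show 2 ≤ n + 1 by omega)
    omega
  rw [Fin.prod_univ_castSucc, prod_congr rfl fun k _ => hdiag k, prod_const_one, one_mul,
    finRotate_last, MatD_apply_last, Fin.val_zero, Nat.sub_zero, Nat.add_sub_cancel,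
    degree_sub_eq_right_of_degree_lt] <;> rw [degree_X_pow]
  refine (?_ : _ ≤ _).trans_lt (WithBot.coe_lt_coe.2 hchoose)
  compute_degree

theorem natDegree_prod_MatD_le {σ : Perm (Fin (n + 1))}
    (h : ∀ k : Fin n, (σ k.castSucc : ℕ) ≤ k + 1) :
    (∏ i, MatD (n + 1) (σ i) i).natDegree ≤
      (σ (Fin.last n) : ℕ).choose 2 + 2 * (n + 1 - σ (Fin.last n)).choose 2 := by
  rw [Fin.prod_univ_castSucc]
  refine natDegree_mul_le.trans (add_le_add ?_ (natDegree_MatD_apply_last_le _))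
  calc (∏ k : Fin n, MatD (n + 1) (σ k.castSucc) k.castSucc).natDegree
      ≤ ∑ k : Fin n, ((k : ℕ) + 1 - σ k.castSucc).choose 2 := by
        refine (natDegree_prod_le _ _).trans (sum_le_sum fun k _ => ?_)
        rw [MatD_apply_castSucc, if_pos (h k), natDegree_X_pow]
    _ ≤ (∑ k : Fin n, ((k : ℕ) + 1 - σ k.castSucc)).choose 2 := sum_choose_two_le_choose_two_sum _ _
    _ = (σ (Fin.last n) : ℕ).choose 2 := by rw [Perm.sum_succ_sub_apply_castSucc h]

theorem degree_prod_MatD_lt {σ : Perm (Fin (n + 1))} (hσ : σ ≠ finRotate (n + 1)) :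
    (∏ i, MatD (n + 1) (σ i) i).degree < ((n + 1) * n : ℕ) := by
  by_cases h : ∀ k : Fin n, (σ k.castSucc : ℕ) ≤ k + 1
  · set r : ℕ := (σ (Fin.last n) : ℕ)
    have hr0 : r ≠ 0 := fun h0 => hσ (Perm.eq_finRotate_of_apply_last_eq_zero h (Fin.ext h0))
    have hrn : r ≤ n := Fin.is_le _
    have hbound : r.choose 2 + 2 * (n + 1 - r).choose 2 < (n + 1) * n := by
      have hsplit := Nat.choose_two_add_choose_two_lt (a := r) (b := n + 1 - r) (by omega) (by omega)
      have hmono := Nat.choose_le_choose 2 (show n + 1 - r ≤ n + 1 by omega)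
      have htwice : 2 * (n + 1).choose 2 = (n + 1) * n := by
        simpa using Nat.two_mul_choose_two (n + 1)
      rw [Nat.add_sub_of_le (by omega)] at hsplit
      omega
    exact degree_le_natDegree.trans_lt
      (WithBot.coe_lt_coe.2 ((natDegree_prod_MatD_le h).trans_lt hbound))
  · push Not at h
    obtain ⟨k, hk⟩ := h
    rw [prod_eq_zero (mem_univ k.castSucc) (by rw [MatD_apply_castSucc, if_neg hk.not_ge]), degree_zero]
    exact WithBot.bot_lt_coe _

end MatD

/-- `det 𝓜ᴰ_n` is a polynomial of degree exactly `n(n-1)`, for `n ≥ 2`. -/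
theorem det_MatD_degree (n : ℕ) (hn : 2 ≤ n) :
    (MatD n).det.degree = ((n * (n - 1) : ℕ) : WithBot ℕ) := by
  obtain ⟨m, rfl⟩ : ∃ m, n = m + 1 := ⟨n - 1, by omega⟩
  rw [Nat.add_sub_cancel]
  exact Matrix.degree_det_eq_of_degree_prod_lt _ _ (degree_prod_MatD_finRotate (by omega))
    fun σ hσ => degree_prod_MatD_lt hσ
end
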